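/- arXiv:1507.02803 — 3 statements merged into one kernel-verified Lean document; each statement's English description precedes it below -/
import Mathlib

section
/- Let r and s be two probability measures on a finite set X, and set α_s = min{ s(x) : s(x) ≠ 0 }. If D(r‖s) < ∞ then D(r‖s) ≤ (4/α_s) · |r − s|². -/
open Finset

def IsPMF {α : Type*} [Fintype α] (p : α → ℝ) : Prop :=
  (∀ a, 0 ≤ p a) ∧ ∑ a, p a = 1

noncomputable def tv {α : Type*} [Fintype α] (r s : α → ℝ) : ℝ :=
  (∑ a, |r a - s a|) / 2

noncomputable def relEntE {α : Type*} [Fintype α] (r s : α → ℝ) : EReal :=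
  ∑ a, if r a = 0 then (0 : EReal)
    else if s a = 0 then (⊤ : EReal)
    else ((r a * Real.log (r a / s a) : ℝ) : EReal)

lemma ereal_coe_fsum {α : Type*} (t : Finset α) (f : α → ℝ) :
    ((∑ a ∈ t, f a : ℝ) : EReal) = ∑ a ∈ t, ((f a : ℝ) : EReal) := by
  induction t using Finset.cons_induction with
  | empty => simp
  | cons a t ha ih => rw [Finset.sum_cons, Finset.sum_cons, EReal.coe_add, ih]

/-- Lemma 2: a converse to the Pinsker–Csiszár–Kullback inequality. -/
theorem relEnt_le_tv_sq {X : Type*} [Fintype X]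
    (r s : X → ℝ) (hr : IsPMF r) (hs : IsPMF s) (αs : ℝ)
    (hαs : IsLeast {a : ℝ | ∃ x, s x ≠ 0 ∧ a = s x} αs)
    (hfin : relEntE r s < ⊤) :
    relEntE r s ≤ (((4 / αs) * (tv r s) ^ 2 : ℝ) : EReal) := by
  classical
  obtain ⟨⟨x₀, hx₀, hax⟩, hlb⟩ := hαs
  have hα_pos : 0 < αs := hax ▸ lt_of_le_of_ne (hs.1 x₀) (Ne.symm hx₀)
  set F : X → EReal := fun a => if r a = 0 then (0 : EReal)
    else if s a = 0 then (⊤ : EReal)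
    else ((r a * Real.log (r a / s a) : ℝ) : EReal) with hF
  have hFsum : relEntE r s = ∑ a, F a := rfl
  set c : X → ℝ := fun a => if r a = 0 then 0
    else if s a = 0 then 0 else r a * Real.log (r a / s a) with hc
  have hFc : ∀ a, ((c a : ℝ) : EReal) ≤ F a := by
    intro a
    by_cases h1 : r a = 0
    · simp [hF, hc, h1]
    · by_cases h2 : s a = 0
      · simp [hF, hc, h1, h2]
      · simp [hF, hc, h1, h2]
  have h0 : ∀ x, s x = 0 → r x = 0 := by
    intro x hsx
    by_contra hrx
    apply absurd hfin
    simp only [not_lt, top_le_iff]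
    rw [hFsum, ← Finset.add_sum_erase _ F (Finset.mem_univ x)]
    have hFx : F x = ⊤ := by simp [hF, hrx, hsx]
    rw [hFx]
    apply EReal.top_add_of_ne_bot
    have : ((∑ a ∈ Finset.univ.erase x, c a : ℝ) : EReal) ≤
        ∑ a ∈ Finset.univ.erase x, F a := by
      rw [ereal_coe_fsum]
      exact Finset.sum_le_sum fun a _ => hFc a
    exact ne_of_gt (lt_of_lt_of_le (EReal.bot_lt_coe _) this)
  set g : X → ℝ := fun x => if r x = 0 then 0 else r x * Real.log (r x / s x) with hg
  have hrel : relEntE r s = ((∑ x, g x : ℝ) : EReal) := by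
    rw [hFsum, ereal_coe_fsum]
    refine Finset.sum_congr rfl fun x _ => ?_
    by_cases h1 : r x = 0
    · simp [hF, hg, h1]
    · have h2 : s x ≠ 0 := fun h => h1 (h0 x h)
      simp [hF, hg, h1, h2]
  rw [hrel, EReal.coe_le_coe_iff]
  -- now a real inequality
  have hsum2 : ∑ x, (if s x = 0 then (0:ℝ) else (r x - s x)) = 0 := by
    have : ∀ x, (if s x = 0 then (0:ℝ) else (r x - s x)) = r x - s x := by
      intro x
      by_cases h2 : s x = 0
      · simp [h2, h0 x h2]
      · simp [h2]
    simp only [this, Finset.sum_sub_distrib, hr.2, hs.2, sub_self]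
  have step1 : ∑ x, g x ≤
      ∑ x, ((if s x = 0 then (0:ℝ) else (r x - s x)^2 / s x) +
        (if s x = 0 then (0:ℝ) else (r x - s x))) := by
    refine Finset.sum_le_sum fun x _ => ?_
    by_cases h2 : s x = 0
    · simp [hg, h0 x h2, h2]
    · have hsx : 0 < s x := lt_of_le_of_ne (hs.1 x) (Ne.symm h2)
      by_cases h1 : r x = 0
      · have h4 : (r x - s x)^2 / s x + (r x - s x) = 0 := by
          rw [h1]; field_simp; ring
        simp only [hg, if_pos h1, if_neg h2]
        linarith [h4]
      · have hrx : 0 < r x := lt_of_le_of_ne (hr.1 x) (Ne.symm h1)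
        simp only [hg, if_neg h1, if_neg h2]
        have hpos : 0 < r x / s x := div_pos hrx hsx
        have hlog : Real.log (r x / s x) ≤ r x / s x - 1 :=
          Real.log_le_sub_one_of_pos hpos
        have h3 : r x * Real.log (r x / s x) ≤ r x * (r x / s x - 1) :=
          mul_le_mul_of_nonneg_left hlog (le_of_lt hrx)
        have h4 : r x * (r x / s x - 1) = (r x - s x)^2 / s x + (r x - s x) := by
          field_simp; ring
        linarith
  rw [Finset.sum_add_distrib, hsum2, add_zero] at step1
  have step2 : ∑ x, (if s x = 0 then (0:ℝ) else (r x - s x)^2 / s x) ≤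
      (∑ x, (r x - s x)^2) / αs := by
    rw [Finset.sum_div]
    refine Finset.sum_le_sum fun x _ => ?_
    by_cases h2 : s x = 0
    · simp only [if_pos h2]
      positivity
    · simp only [if_neg h2]
      have hαle : αs ≤ s x := hlb ⟨x, h2, rfl⟩
      exact div_le_div_of_nonneg_left (sq_nonneg _) hα_pos hαle
  have step3 : ∑ x, (r x - s x)^2 ≤ (∑ x, |r x - s x|)^2 := by
    have hS : ∀ x, |r x - s x| ≤ ∑ y, |r y - s y| := fun x =>
      Finset.single_le_sum (f := fun y => |r y - s y|) (fun y _ => abs_nonneg _)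
        (Finset.mem_univ x)
    calc ∑ x, (r x - s x)^2 = ∑ x, |r x - s x|^2 := by simp [sq_abs]
      _ ≤ ∑ x, |r x - s x| * (∑ y, |r y - s y|) :=
          Finset.sum_le_sum fun x _ => by
            rw [sq]
            exact mul_le_mul_of_nonneg_left (hS x) (abs_nonneg _)
      _ = (∑ x, |r x - s x|)^2 := by rw [← Finset.sum_mul, sq]
  have htv : tv r s = (∑ x, |r x - s x|) / 2 := rfl
  have : (∑ x, (r x - s x)^2) / αs ≤ 4 / αs * tv r s ^ 2 := by
    rw [htv]
    rw [div_le_iff₀ hα_pos] at *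
    have : 4 / αs * ((∑ x, |r x - s x|) / 2)^2 * αs = (∑ x, |r x - s x|)^2 := by
      field_simp; ring
    linarith
  linarith
end

section
/- Fix d ≥ 1, m ≥ 1, and two distinct sites k, i ∈ Z^d. The number of m-sided axis-parallel lattice cubes I ⊂ Z^d satisfying i ∈ I and k ∉ I is at most min{ d·m^{d−1}·ρ(k,i), m^d }, where ρ(k,i) = max_ν |k_ν − i_ν|. -/
/-- Sites of the `d`-dimensional cubic lattice. -/
abbrev Site (d : ℕ) := Fin d → ℤ

/-- The sup-metric `ρ(k,i) = max_ν |k_ν − i_ν|` on `ℤ^d`. -/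
def rho {d : ℕ} (k i : Site d) : ℕ :=
  Finset.univ.sup fun ν => (k ν - i ν).natAbs

/-- The `m`-sided lattice cube with lower corner `a`. -/
noncomputable def cube {d : ℕ} (m : ℕ) (a : Site d) : Finset (Site d) :=
  Fintype.piFinset fun ν => Finset.Icc (a ν) (a ν + (m : ℤ) - 1)

/-!
The corners `a` of cubes containing `i` form the box `Π_ν [i_ν − (m−1), i_ν]`, and `k ∈ cube m a`
says exactly that `a` also lies in the analogous box around `k`. A corner separating `i` from `k`
therefore leaves the second box in some coordinate `ν`, where the two intervals of length `m` are
translates by `k_ν − i_ν` and so differ in at most `ρ(k,i)` points; the other `d − 1` coordinates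
give at most `m` choices each. A union bound over `ν` gives `d·m^{d−1}·ρ(k,i)`, and the whole box
has `m^d` points.
-/

open Finset

section PiFinset

variable {ι : Type*} [Fintype ι] [DecidableEq ι] {α : ι → Type*} [∀ j, DecidableEq (α j)]

theorem Fintype.piFinset_sdiff_subset_biUnion (s t : ∀ j, Finset (α j)) :
    Fintype.piFinset s \ Fintype.piFinset t ⊆
      univ.biUnion fun j => Fintype.piFinset (Function.update s j (s j \ t j)) := by
  intro a ha
  simp only [mem_sdiff, Fintype.mem_piFinset, not_forall] at ha
  obtain ⟨hs, j, hj⟩ := ha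
  refine mem_biUnion.2 ⟨j, mem_univ _, Fintype.mem_piFinset.2 fun l => ?_⟩
  rcases eq_or_ne l j with rfl | hl
  · simpa using mem_sdiff.2 ⟨hs l, hj⟩
  · simpa [hl] using hs l

theorem Fintype.card_piFinset_sdiff_le (s t : ∀ j, Finset (α j)) :
    #(Fintype.piFinset s \ Fintype.piFinset t) ≤
      ∑ j, #(s j \ t j) * ∏ l ∈ univ.erase j, #(s l) := by
  refine (card_le_card (piFinset_sdiff_subset_biUnion s t)).trans (card_biUnion_le.trans ?_)
  refine sum_le_sum fun j _ => le_of_eq ?_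
  rw [Fintype.card_piFinset, ← sdiff_singleton_eq_erase,
    ← prod_update_of_mem (mem_univ j) (fun l => #(s l))]
  exact Finset.prod_congr rfl fun l _ => Function.apply_update (fun _ u => #u) s j _ l

end PiFinset

theorem Int.card_Icc_sdiff_Icc_le (c x y : ℤ) :
    #(Icc (x - c) x \ Icc (y - c) y) ≤ (y - x).natAbs := by
  rcases le_or_gt x y with h | h
  · calc _ ≤ #(Ico (x - c) (y - c)) := card_le_card fun z hz => by
          simp only [mem_sdiff, mem_Icc, mem_Ico, not_and, not_le] at hz ⊢
          omega
      _ ≤ (y - x).natAbs := by rw [Int.card_Ico]; omega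
  · calc _ ≤ #(Ioc y x) := card_le_card fun z hz => by
          simp only [mem_sdiff, mem_Icc, mem_Ioc, not_and, not_le] at hz ⊢
          omega
      _ ≤ (y - x).natAbs := by rw [Int.card_Ioc]; omega

theorem mem_cube_iff {d m : ℕ} (k a : Site d) :
    k ∈ cube m a ↔ a ∈ Fintype.piFinset fun ν => Icc (k ν - ((m : ℤ) - 1)) (k ν) := by
  simp only [cube, Fintype.mem_piFinset, mem_Icc]
  exact forall_congr' fun ν => by omega

theorem natAbs_sub_le_rho {d : ℕ} (k i : Site d) (ν : Fin d) : (k ν - i ν).natAbs ≤ rho k i :=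
  le_sup (f := fun ν => (k ν - i ν).natAbs) (mem_univ ν)

theorem card_cubes_sep_le_general {d m : ℕ}
    (k i : Site d) :
    ((Fintype.piFinset fun ν => Finset.Icc (i ν - ((m : ℤ) - 1)) (i ν)).filter
        fun a => k ∉ cube m a).card ≤
      min (d * m ^ (d - 1) * rho k i) (m ^ d) := by
  set corners : Site d → Fin d → Finset ℤ := fun x ν => Icc (x ν - ((m : ℤ) - 1)) (x ν)
  have card_corners : ∀ x ν, #(corners x ν) = m := fun x ν => by
    simp only [corners, Int.card_Icc]; omega
  have sep_eq : ((Fintype.piFinset (corners i)).filter fun a => k ∉ cube m a) =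
      Fintype.piFinset (corners i) \ Fintype.piFinset (corners k) := by
    simp only [sdiff_eq_filter, mem_cube_iff]; rfl
  rw [sep_eq]
  refine le_min ?_ ?_
  · calc _ ≤ ∑ ν, #(corners i ν \ corners k ν) * ∏ μ ∈ univ.erase ν, #(corners i μ) :=
          Fintype.card_piFinset_sdiff_le _ _
      _ ≤ ∑ _ν : Fin d, rho k i * m ^ (d - 1) := sum_le_sum fun ν _ => by
          simp only [card_corners, prod_const, card_erase_of_mem (mem_univ ν), card_univ,
            Fintype.card_fin]
          exact Nat.mul_le_mul_right _
            ((Int.card_Icc_sdiff_Icc_le _ _ _).trans (natAbs_sub_le_rho k i ν))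
      _ = d * m ^ (d - 1) * rho k i := by simp [mul_comm, mul_left_comm]
  · calc _ ≤ #(Fintype.piFinset (corners i)) := card_le_card sdiff_subset
      _ = m ^ d := by simp [card_corners]

/-- the number of `m`-sided lattice cubes containing `i` but not `k` is at
most `min { d·m^{d−1}·ρ(k,i), m^d }`.  (The corners `a` of the cubes containing `i` are
exactly the points of `Π_ν [i_ν − (m−1), i_ν]`.) -/
theorem card_cubes_sep_le {d m : ℕ} (hd : 1 ≤ d) (hm : 1 ≤ m)
    (k i : Site d) (hki : k ≠ i) :
    ((Fintype.piFinset fun ν => Finset.Icc (i ν - ((m : ℤ) - 1)) (i ν)).filter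
        fun a => k ∉ cube m a).card ≤
      min (d * m ^ (d - 1) * rho k i) (m ^ d) :=
  card_cubes_sep_le_general k i
end

section
/- Let X be a finite set, Λ ⊂⊂ Z^d, ȳ_Λ a fixed outside configuration, I_m the set of m-sided cubes intersecting Λ, N = |I_m|, and Γ_{I_m} the block Gibbs sampler for q_Λ(·|ȳ_Λ) defined by the local specifications q_{I∩Λ}(·|ȳ_{I∩Λ}), I ∈ I_m. Then for any probability measure p_Λ = L(Y_Λ) on X^Λ, W_2²( p_Λ, p_ΛΓ_{I_m} ) ≤ (m^d / N²) · Σ_{I∈I_m} E W_2²( p_{I∩Λ}(·|Ȳ_{I∩Λ}), q_{I∩Λ}(·|Ȳ_{I∩Λ}) ). -/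
open Finset

noncomputable def W2sq {ι X : Type*} [Fintype ι] [DecidableEq ι] [Fintype X] [DecidableEq X]
    (r s : (ι → X) → ℝ) : ℝ :=
  sInf { w : ℝ | ∃ π : (ι → X) × (ι → X) → ℝ,
    (∀ z, 0 ≤ π z) ∧ (∀ a, ∑ b, π (a, b) = r a) ∧ (∀ b, ∑ a, π (a, b) = s b) ∧
    w = ∑ i : ι, (∑ z : (ι → X) × (ι → X), if z.1 i ≠ z.2 i then π z else 0) ^ 2 }

def patchF {ι X : Type*} [DecidableEq ι] (I : Finset ι) (x : ι → X) (y : ↥I → X) : ι → X :=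
  fun i => if h : i ∈ I then y ⟨i, h⟩ else x i

noncomputable def condF {ι X : Type*} [Fintype ι] [DecidableEq ι] [Fintype X]
    (p : (ι → X) → ℝ) (I : Finset ι) (x : ι → X) : (↥I → X) → ℝ :=
  fun y => p (patchF I x y) / ∑ y' : ↥I → X, p (patchF I x y')

noncomputable def cond1 {ι X : Type*} [Fintype ι] [DecidableEq ι] [Fintype X]
    (p : (ι → X) → ℝ) (i : ι) (x : ι → X) : X → ℝ :=
  fun c => p (Function.update x i c) / ∑ c' : X, p (Function.update x i c')

noncomputable def gibbsStep {ι X : Type*} [Fintype ι] [DecidableEq ι] [Fintype X] [DecidableEq X]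
    (q p : (ι → X) → ℝ) : (ι → X) → ℝ :=
  fun z => (1 / (Fintype.card ι : ℝ)) * ∑ i : ι, ∑ y : ι → X,
    p y * (if Function.update y i (z i) = z then cond1 q i y (z i) else 0)
/-- `ρ(k,M) = min_{i ∈ M} ρ(k,i)`. -/
noncomputable def rhoSet {d : ℕ} (k : Site d) (M : Finset (Site d)) : ℕ :=
  sInf {r : ℕ | ∃ i ∈ M, r = rho k i}

/-- A compatible ensemble of local specifications `q_Λ(·|x̄_Λ)` on `X^{ℤ^d}`:
for each finite `Λ ⊂⊂ ℤ^d` and boundary configuration `x` (only its values outside `Λ`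
matter) a probability distribution on configurations `↥Λ → X`, depending only on the
boundary values outside `Λ` and satisfying the natural compatibility conditions. -/
structure Ensemble (d : ℕ) (X : Type*) [Fintype X] [DecidableEq X] where
  q : (Λ : Finset (Site d)) → (Site d → X) → ({ i : Site d // i ∈ Λ } → X) → ℝ
  nonneg : ∀ (Λ : Finset (Site d)) (x : Site d → X) (y : ↥Λ → X), 0 ≤ q Λ x y
  sum_one : ∀ (Λ : Finset (Site d)) (x : Site d → X), ∑ y : ↥Λ → X, q Λ x y = 1
  localDep : ∀ (Λ : Finset (Site d)) (x x' : Site d → X),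
    (∀ i, i ∉ Λ → x i = x' i) → q Λ x = q Λ x'
  compatible : ∀ (M Λ : Finset (Site d)) (hM : M ⊆ Λ) (x : Site d → X) (y : ↥Λ → X),
    q Λ x y =
      (∑ y' : ↥Λ → X, if (∀ i : ↥Λ, (i : Site d) ∉ M → y' i = y i) then q Λ x y' else 0)
        * q M (fun i => if h : i ∈ Λ then y ⟨i, h⟩ else x i) (fun i => y ⟨i.1, hM i.2⟩)

/-- The marginal on `M ⊆ Λ` of a measure on `X^Λ`. -/
noncomputable def marg {d : ℕ} {X : Type*} [Fintype X] [DecidableEq X]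
    {M Λ : Finset (Site d)} (hM : M ⊆ Λ) (μ : (↥Λ → X) → ℝ) : (↥M → X) → ℝ :=
  fun yM => ∑ y : ↥Λ → X, if (∀ i : ↥M, y ⟨i.1, hM i.2⟩ = yM i) then μ y else 0

/-- The strong mixing condition with coupling function `φ`. -/
def StrongMixing {d : ℕ} {X : Type*} [Fintype X] [DecidableEq X]
    (Q : Ensemble d X) (φ : ℕ → ℝ) : Prop :=
  ∀ (M Λ : Finset (Site d)) (hM : M ⊆ Λ) (x x' : Site d → X) (k : Site d),
    k ∉ Λ → (∀ j, j ≠ k → x j = x' j) →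
    tv (marg hM (Q.q Λ x)) (marg hM (Q.q Λ x')) ≤ φ (rhoSet k M)

/-- The lower corners of the `m`-sided cubes intersecting `Λ`; these corners index the
family `I_m = I_m(Λ)` of `m`-sided cubes that intersect `Λ`. -/
noncomputable def corners {d : ℕ} (m : ℕ) (Λ : Finset (Site d)) : Finset (Site d) :=
  Λ.biUnion fun i => Fintype.piFinset fun ν => Finset.Icc (i ν - ((m : ℤ) - 1)) (i ν)

/-- `‖Φ‖ = Σ_{i ∈ ℤ^d} φ(ρ(0,i))`, the norm of the matrix `Φ = (φ(ρ(k,i)))`. -/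
noncomputable def phiNorm (d : ℕ) (φ : ℕ → ℝ) : ℝ :=
  ∑' i : Site d, φ (rho 0 i)

/-- `Θ_m = min_R [ ‖Φ‖·(d·R)/m + 2d·Σ_{r≥R} (2r+1)^{d−1} φ(r) ]`. -/
noncomputable def Theta (d m : ℕ) (φ : ℕ → ℝ) : ℝ :=
  sInf { t : ℝ | ∃ R : ℕ,
    t = phiNorm d φ * (d * R) / m
      + 2 * d * ∑' r : ℕ, (if R ≤ r then ((2 * (r : ℝ) + 1)) ^ (d - 1) * φ r else 0) }

/-- The intersection `I ∩ Λ` (as a finset of `↥Λ`) of the `m`-sided cube with corner `a`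
with `Λ`. -/
noncomputable def blockIn {d : ℕ} (Λ : Finset (Site d)) (m : ℕ) (a : Site d) : Finset ↥Λ :=
  Λ.attach.filter fun i => (i : Site d) ∈ cube m a

/-- One step of the block Gibbs sampler `Γ_{I_m}` for the measure `q_Λ(·|ȳ_Λ)`: a cube
`I ∈ I_m` is selected uniformly at random, and the coordinates in `I ∩ Λ` are updated
according to the local specification `q_{I∩Λ}(·|ȳ_{I∩Λ})`. -/
noncomputable def cubeGibbsStep {d : ℕ} {X : Type*} [Fintype X] [DecidableEq X]
    (Q : Ensemble d X) (Λ : Finset (Site d)) (ybar : Site d → X) (m : ℕ)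
    (p : (↥Λ → X) → ℝ) : (↥Λ → X) → ℝ :=
  fun z => (1 / ((corners m Λ).card : ℝ)) * ∑ a ∈ corners m Λ, ∑ y : ↥Λ → X,
    p y * (if ∀ i : ↥Λ, i ∉ blockIn Λ m a → z i = y i
           then condF (Q.q Λ ybar) (blockIn Λ m a) y (fun i => z i.1) else 0)

/-- The ensemble has finite range of interaction `R`: `q_Λ(·|x̄_Λ)` depends only on the
boundary coordinates `x_k` with `ρ(k,Λ) ≤ R`. -/
def FiniteRange {d : ℕ} {X : Type*} [Fintype X] [DecidableEq X]
    (Q : Ensemble d X) (R : ℕ) : Prop :=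
  ∀ (Λ : Finset (Site d)) (x x' : Site d → X),
    (∀ j, rhoSet j Λ ≤ R → x j = x' j) → Q.q Λ x = Q.q Λ x'

/-!
Couple `p` with one step of the sampler: pick a cube `I` uniformly and `Y ~ p`, let `Z` and `U`
agree with `Y` off `I`, and draw their `I ∩ Λ`-coordinates from a near-optimal coupling of
`p_{I∩Λ}(·|Y)` and `q_{I∩Λ}(·|Y)`. Then `Z ~ p` by disintegration, `U` follows the sampler, and
sites outside `I` never disagree, so `Pr{Z_i ≠ U_i} = (1/N) Σ_{I ∋ i} E_Y c_I(Y, i)`, where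
`c_I(Y, i)` is the disagreement probability at `i` of the local coupling. Cauchy–Schwarz over the
at most `m^d` cubes containing `i`, then Jensen in `Y`, bound its square by
`(m^d / N²) Σ_I E_Y c_I(Y, i)²`, and summing over `i` yields the local `W₂²` costs.
-/

theorem sq_sum_le_card_filter_mul_sum_sq {A : Type*} (s : Finset A) (P : A → Prop)
    [DecidablePred P] {f : A → ℝ} (hf : ∀ a ∈ s, ¬P a → f a = 0) :
    (∑ a ∈ s, f a) ^ 2 ≤ #{a ∈ s | P a} * ∑ a ∈ s, f a ^ 2 := by
  rw [← Finset.sum_filter_of_ne fun a ha hne => not_not.1 fun hP => hne (hf a ha hP)]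
  refine sq_sum_le_card_mul_sum_sq.trans (mul_le_mul_of_nonneg_left ?_ (Nat.cast_nonneg _))
  exact Finset.sum_le_sum_of_subset_of_nonneg (Finset.filter_subset _ _) fun _ _ _ => sq_nonneg _

theorem sq_sum_mul_le_sum_mul_sq {A : Type*} [Fintype A] {p : A → ℝ} (hp : IsPMF p)
    (f : A → ℝ) : (∑ a, p a * f a) ^ 2 ≤ ∑ a, p a * f a ^ 2 := by
  have h := Finset.sum_sq_le_sum_mul_sum_of_sq_le_mul Finset.univ (fun a _ => hp.1 a)
    (fun a _ => mul_nonneg (hp.1 a) (sq_nonneg (f a)))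
    fun a _ => (by ring : (p a * f a) ^ 2 = p a * (p a * f a ^ 2)).le
  rwa [hp.2, one_mul] at h

theorem le_of_forall_pos_le_add_mul {a b c : ℝ} (hc : 0 ≤ c) (h : ∀ ε > 0, a ≤ b + c * ε) :
    a ≤ b := by
  refine le_of_forall_pos_le_add fun ε hε => (h (ε / (c + 1)) (by positivity)).trans ?_
  gcongr
  calc c * (ε / (c + 1)) ≤ (c + 1) * (ε / (c + 1)) := by gcongr; linarith
    _ = ε := mul_div_cancel₀ _ (by positivity)

section Coupling

variable {α β : Type*} [Fintype α] [Fintype β]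

structure IsCoupling (π : α × β → ℝ) (r : α → ℝ) (s : β → ℝ) : Prop where
  nonneg : ∀ z, 0 ≤ π z
  sum_snd : ∀ a, ∑ b, π (a, b) = r a
  sum_fst : ∀ b, ∑ a, π (a, b) = s b

theorem isCoupling_mul {r : α → ℝ} {s : β → ℝ} (hr : IsPMF r) (hs : IsPMF s) :
    IsCoupling (fun z => r z.1 * s z.2) r s where
  nonneg z := mul_nonneg (hr.1 _) (hs.1 _)
  sum_snd a := by dsimp only; rw [← Finset.mul_sum, hs.2, mul_one]
  sum_fst b := by dsimp only; rw [← Finset.sum_mul, hr.2, one_mul]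

theorem isCoupling_sum {κ : Type*} (s : Finset κ) {w : κ → ℝ} {π : κ → α × β → ℝ}
    {r : κ → α → ℝ} {t : κ → β → ℝ} (hw : ∀ k ∈ s, 0 ≤ w k)
    (h : ∀ k ∈ s, 0 < w k → IsCoupling (π k) (r k) (t k)) :
    IsCoupling (fun z => ∑ k ∈ s, w k * π k z) (fun a => ∑ k ∈ s, w k * r k a)
      (fun b => ∑ k ∈ s, w k * t k b) where
  nonneg z := Finset.sum_nonneg fun k hk => by
    rcases (hw k hk).eq_or_lt with h0 | hpos
    · simp [← h0]
    · exact mul_nonneg hpos.le ((h k hk hpos).nonneg z)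
  sum_snd a := by
    rw [Finset.sum_comm]
    refine Finset.sum_congr rfl fun k hk => ?_
    rw [← Finset.mul_sum]
    rcases (hw k hk).eq_or_lt with h0 | hpos
    · simp [← h0]
    · rw [(h k hk hpos).sum_snd]
  sum_fst b := by
    rw [Finset.sum_comm]
    refine Finset.sum_congr rfl fun k hk => ?_
    rw [← Finset.mul_sum]
    rcases (hw k hk).eq_or_lt with h0 | hpos
    · simp [← h0]
    · rw [(h k hk hpos).sum_fst]

end Coupling

section Wasserstein

variable {ι X : Type*} [Fintype ι] [DecidableEq ι] [Fintype X] [DecidableEq X]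

/-- `Pr_π{Z_i ≠ U_i}`. -/
def disagreeProb (π : (ι → X) × (ι → X) → ℝ) (i : ι) : ℝ :=
  ∑ z : (ι → X) × (ι → X), if z.1 i ≠ z.2 i then π z else 0

def w2Cost (π : (ι → X) × (ι → X) → ℝ) : ℝ :=
  ∑ i, disagreeProb π i ^ 2

theorem disagreeProb_const_mul (c : ℝ) (π : (ι → X) × (ι → X) → ℝ) (i : ι) :
    disagreeProb (fun z => c * π z) i = c * disagreeProb π i := by
  simp only [disagreeProb, Finset.mul_sum, mul_ite, mul_zero]

theorem disagreeProb_sum {κ : Type*} (s : Finset κ) (π : κ → (ι → X) × (ι → X) → ℝ) (i : ι) :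
    disagreeProb (fun z => ∑ k ∈ s, π k z) i = ∑ k ∈ s, disagreeProb (π k) i := by
  simp only [disagreeProb]
  rw [Finset.sum_comm]
  refine Finset.sum_congr rfl fun z _ => ?_
  split_ifs <;> simp

theorem w2Cost_nonneg (π : (ι → X) × (ι → X) → ℝ) : 0 ≤ w2Cost π := by
  unfold w2Cost; positivity

theorem W2sq_eq_sInf_image (r s : (ι → X) → ℝ) :
    W2sq r s = sInf (w2Cost '' {π | IsCoupling π r s}) := by
  unfold W2sq
  congr 1
  ext w
  constructor
  · rintro ⟨π, h0, h1, h2, rfl⟩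
    exact ⟨π, ⟨h0, h1, h2⟩, rfl⟩
  · rintro ⟨π, ⟨h0, h1, h2⟩, rfl⟩
    exact ⟨π, h0, h1, h2, rfl⟩

theorem W2sq_le_w2Cost {r s : (ι → X) → ℝ} {π : (ι → X) × (ι → X) → ℝ}
    (h : IsCoupling π r s) : W2sq r s ≤ w2Cost π := by
  rw [W2sq_eq_sInf_image]
  exact csInf_le ⟨0, Set.forall_mem_image.2 fun π _ => w2Cost_nonneg π⟩ ⟨π, h, rfl⟩

theorem W2sq_nonneg (r s : (ι → X) → ℝ) : 0 ≤ W2sq r s := by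
  rw [W2sq_eq_sInf_image]
  exact Real.sInf_nonneg (Set.forall_mem_image.2 fun π _ => w2Cost_nonneg π)

theorem W2sq_eq_zero_of_sum_ne {r s : (ι → X) → ℝ} (h : ∑ a, r a ≠ ∑ b, s b) :
    W2sq r s = 0 := by
  have hempty : {π | IsCoupling π r s} = ∅ := by
    refine Set.eq_empty_of_forall_notMem fun π hπ => h ?_
    simp only [← hπ.sum_snd, ← hπ.sum_fst]
    exact Finset.sum_comm
  rw [W2sq_eq_sInf_image, hempty, Set.image_empty, Real.sInf_empty]

theorem exists_isCoupling_w2Cost_lt {r s : (ι → X) → ℝ} (hr : IsPMF r) (hs : IsPMF s)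
    {ε : ℝ} (hε : 0 < ε) : ∃ π, IsCoupling π r s ∧ w2Cost π < W2sq r s + ε := by
  rw [W2sq_eq_sInf_image]
  obtain ⟨-, ⟨π, hπ, rfl⟩, hlt⟩ :=
    Real.lt_sInf_add_pos
      (Set.image_nonempty.2 (⟨_, isCoupling_mul hr hs⟩ : {π | IsCoupling π r s}.Nonempty)) hε
  exact ⟨π, hπ, hlt⟩

end Wasserstein

section Patch

variable {ι X : Type*} [DecidableEq ι] (B : Finset ι)

theorem patchF_of_notMem {x : ι → X} (w : ↥B → X) {i : ι} (h : i ∉ B) :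
    patchF B x w i = x i := by
  simp [patchF, h]

theorem restrict_patchF (x : ι → X) (w : ↥B → X) : (fun j : ↥B => patchF B x w j) = w := by
  funext j
  simp [patchF, j.2]

theorem patchF_restrict {x u : ι → X} (h : ∀ i, i ∉ B → u i = x i) :
    patchF B x (fun j : ↥B => u j) = u := by
  funext i
  by_cases hi : i ∈ B
  · simp [patchF, hi]
  · simp [patchF, hi, h i hi]

theorem patchF_congr {x x' : ι → X} (h : ∀ i, i ∉ B → x i = x' i) (w : ↥B → X) :
    patchF B x w = patchF B x' w := by
  funext i
  by_cases hi : i ∈ B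
  · simp [patchF, hi]
  · simp [patchF, hi, h i hi]

end Patch

section PatchLaw

variable {ι X : Type*} [Fintype ι] [DecidableEq ι] [Fintype X] [DecidableEq X]
  (B : Finset ι) (y : ι → X)

theorem sum_ite_eqOn_compl (f : (ι → X) → ℝ) :
    ∑ u : ι → X, (if ∀ i, i ∉ B → u i = y i then f u else 0) = ∑ w : ↥B → X, f (patchF B y w) := by
  rw [Finset.sum_ite, Finset.sum_const_zero, add_zero]
  refine Finset.sum_nbij' (fun u j => u j) (patchF B y) (fun _ _ => Finset.mem_univ _)
    (fun w _ => ?_) (fun u hu => ?_) (fun w _ => restrict_patchF B y w) (fun u hu => ?_)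
  · simpa using fun i hi => patchF_of_notMem B w hi
  · exact patchF_restrict B (Finset.mem_filter.1 hu).2
  · rw [patchF_restrict B (Finset.mem_filter.1 hu).2]

/-- The law of `patchF B y V` for `V ~ f`. -/
def patchLaw (f : (↥B → X) → ℝ) : (ι → X) → ℝ :=
  fun z => if ∀ i, i ∉ B → z i = y i then f (fun i => z i.1) else 0

/-- The law of `(patchF B y V, patchF B y W)` for `(V, W) ~ κ`. -/
def patchCoupling (κ : (↥B → X) × (↥B → X) → ℝ) : (ι → X) × (ι → X) → ℝ :=
  fun z => if (∀ i, i ∉ B → z.1 i = y i) ∧ (∀ i, i ∉ B → z.2 i = y i)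
    then κ (fun i => z.1 i.1, fun i => z.2 i.1) else 0

theorem sum_patchLaw (f : (↥B → X) → ℝ) : ∑ z, patchLaw B y f z = ∑ w, f w := by
  simp only [patchLaw]
  rw [sum_ite_eqOn_compl B y (fun u => f fun j => u j)]
  simp only [restrict_patchF]

variable {B y}

theorem sum_patchCoupling_snd (κ : (↥B → X) × (↥B → X) → ℝ) (z : ι → X) :
    ∑ u, patchCoupling B y κ (z, u) = patchLaw B y (fun v => ∑ w, κ (v, w)) z := by
  by_cases hz : ∀ i, i ∉ B → z i = y i
  · simp only [patchCoupling, patchLaw, eq_true hz, true_and, if_true]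
    exact sum_patchLaw B y fun w => κ (fun i => z i, w)
  · simp [patchCoupling, patchLaw, hz]

theorem sum_patchCoupling_fst (κ : (↥B → X) × (↥B → X) → ℝ) (u : ι → X) :
    ∑ z, patchCoupling B y κ (z, u) = patchLaw B y (fun w => ∑ v, κ (v, w)) u := by
  by_cases hu : ∀ i, i ∉ B → u i = y i
  · simp only [patchCoupling, patchLaw, eq_true hu, and_true, if_true]
    exact sum_patchLaw B y fun v => κ (v, fun i => u i)
  · simp [patchCoupling, patchLaw, hu]

theorem sum_patchCoupling (κ : (↥B → X) × (↥B → X) → ℝ) :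
    ∑ z, patchCoupling B y κ z = ∑ z, κ z := by
  simp only [Fintype.sum_prod_type (f := patchCoupling B y κ), sum_patchCoupling_snd,
    sum_patchLaw, Fintype.sum_prod_type (f := κ)]

theorem IsCoupling.patch {κ : (↥B → X) × (↥B → X) → ℝ} {r s : (↥B → X) → ℝ}
    (h : IsCoupling κ r s) :
    IsCoupling (patchCoupling B y κ) (patchLaw B y r) (patchLaw B y s) where
  nonneg z := by
    unfold patchCoupling
    split_ifs
    exacts [h.nonneg _, le_rfl]
  sum_snd z := by simp only [sum_patchCoupling_snd, h.sum_snd]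
  sum_fst u := by simp only [sum_patchCoupling_fst, h.sum_fst]

theorem disagreeProb_patchCoupling (κ : (↥B → X) × (↥B → X) → ℝ) (i : ι) :
    disagreeProb (patchCoupling B y κ) i =
      if h : i ∈ B then disagreeProb κ ⟨i, h⟩ else 0 := by
  split_ifs with hi
  · refine Eq.trans ?_
      (sum_patchCoupling (y := y) fun z => if z.1 ⟨i, hi⟩ ≠ z.2 ⟨i, hi⟩ then κ z else 0)
    refine Finset.sum_congr rfl fun z _ => ?_
    unfold patchCoupling
    split_ifs <;> simp_all
  · refine Finset.sum_eq_zero fun z _ => ?_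
    unfold patchCoupling
    split_ifs <;> simp_all

theorem w2Cost_patchCoupling (κ : (↥B → X) × (↥B → X) → ℝ) :
    w2Cost (patchCoupling B y κ) = w2Cost κ := by
  simp only [w2Cost, disagreeProb_patchCoupling, apply_dite (· ^ 2), ne_eq, OfNat.ofNat_ne_zero,
    not_false_eq_true, zero_pow]
  rw [Finset.univ_eq_attach]
  exact (Finset.sum_attach_eq_sum_dite B fun j => disagreeProb κ j ^ 2).symm

end PatchLaw

section Conditional

variable {ι X : Type*} [DecidableEq ι] [Fintype X] {p : (ι → X) → ℝ} (B : Finset ι)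

theorem le_sum_patchF (hp : ∀ z, 0 ≤ p z) (x : ι → X) : p x ≤ ∑ w, p (patchF B x w) :=
  calc p x = p (patchF B x fun j => x j) := by rw [patchF_restrict B fun _ _ => rfl]
    _ ≤ _ := Finset.single_le_sum (fun w _ => hp _) (Finset.mem_univ _)

variable [Fintype ι]

theorem condF_congr {x x' : ι → X} (h : ∀ i, i ∉ B → x i = x' i) :
    condF p B x = condF p B x' := by
  funext w
  simp only [condF, patchF_congr B h]

theorem sum_condF (x : ι → X) :
    ∑ w, condF p B x w = (∑ w, p (patchF B x w)) / ∑ w, p (patchF B x w) := by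
  simp only [condF, Finset.sum_div]

theorem isPMF_condF (hp : ∀ z, 0 ≤ p z) {x : ι → X} (hx : ∑ w, p (patchF B x w) ≠ 0) :
    IsPMF (condF p B x) :=
  ⟨fun _ => div_nonneg (hp _) (Finset.sum_nonneg fun _ _ => hp _), by rw [sum_condF, div_self hx]⟩

/-- Disintegration of `p` along the configuration off `B`. -/
theorem sum_mul_patchLaw_condF [DecidableEq X] (hp : ∀ z, 0 ≤ p z) (z : ι → X) :
    ∑ y, p y * patchLaw B y (condF p B y) z = p z := by
  have hterm : ∀ y, p y * patchLaw B y (condF p B y) z =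
      (if ∀ i, i ∉ B → y i = z i then p y else 0) * (p z / ∑ w, p (patchF B z w)) := by
    intro y
    by_cases hy : ∀ i, i ∉ B → y i = z i
    · rw [patchLaw, if_pos fun i hi => (hy i hi).symm, if_pos hy, condF_congr B hy, condF,
        patchF_restrict B fun _ _ => rfl]
    · rw [patchLaw, if_neg fun h => hy fun i hi => (h i hi).symm, if_neg hy, mul_zero, zero_mul]
  rw [Finset.sum_congr rfl fun y _ => hterm y, ← Finset.sum_mul, sum_ite_eqOn_compl]
  rcases eq_or_ne (∑ w, p (patchF B z w)) 0 with hD | hD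
  · have hz : p z = 0 := le_antisymm (hD ▸ le_sum_patchF B hp z) (hp z)
    simp [hz]
  · exact mul_div_cancel₀ _ hD

end Conditional

section BlockGibbs

variable {ι X A : Type*} [Fintype ι] [DecidableEq ι] [Fintype X] [DecidableEq X]

/-- `p Γ_B`: the coordinates in `B` are resampled from the conditional law of `q`. -/
noncomputable def blockUpdate (B : Finset ι) (q p : (ι → X) → ℝ) : (ι → X) → ℝ :=
  fun z => ∑ y, p y * patchLaw B y (condF q B y) z

noncomputable def blockGibbsStep (C : Finset A) (B : A → Finset ι) (q p : (ι → X) → ℝ) :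
    (ι → X) → ℝ :=
  fun z => (1 / (#C : ℝ)) * ∑ a ∈ C, blockUpdate (B a) q p z

noncomputable def blockCoupling (B : Finset ι) (p : (ι → X) → ℝ)
    (κ : (ι → X) → (↥B → X) × (↥B → X) → ℝ) : (ι → X) × (ι → X) → ℝ :=
  fun z => ∑ y, p y * patchCoupling B y (κ y) z

noncomputable def blockGibbsCoupling (C : Finset A) (B : A → Finset ι) (p : (ι → X) → ℝ)
    (κ : ∀ a, (ι → X) → (↥(B a) → X) × (↥(B a) → X) → ℝ) : (ι → X) × (ι → X) → ℝ :=
  fun z => (1 / (#C : ℝ)) * ∑ a ∈ C, blockCoupling (B a) p (κ a) z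

theorem isCoupling_blockCoupling {B : Finset ι} {p q : (ι → X) → ℝ}
    {κ : (ι → X) → (↥B → X) × (↥B → X) → ℝ}
    (hp : ∀ z, 0 ≤ p z) (hκ : ∀ y, 0 < p y → IsCoupling (κ y) (condF p B y) (condF q B y)) :
    IsCoupling (blockCoupling B p κ) p (blockUpdate B q p) := by
  have h := isCoupling_sum Finset.univ (fun y _ => hp y) fun y _ hy => (hκ y hy).patch (y := y)
  simp only [sum_mul_patchLaw_condF B hp] at h
  exact h

variable {C : Finset A} {B : A → Finset ι} {p q : (ι → X) → ℝ}

theorem isCoupling_blockGibbsCoupling (hC : C.Nonempty) (hp : ∀ z, 0 ≤ p z)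
    {κ : ∀ a, (ι → X) → (↥(B a) → X) × (↥(B a) → X) → ℝ}
    (hκ : ∀ a ∈ C, ∀ y, 0 < p y → IsCoupling (κ a y) (condF p (B a) y) (condF q (B a) y)) :
    IsCoupling (blockGibbsCoupling C B p κ) p (blockGibbsStep C B q p) := by
  have h := isCoupling_sum C (w := fun _ => 1 / (#C : ℝ)) (fun _ _ => by positivity)
    fun a ha _ => isCoupling_blockCoupling hp (hκ a ha)
  have hN : (#C : ℝ) * (1 / #C) = 1 := mul_one_div_cancel (by exact_mod_cast hC.card_pos.ne')
  simp only [Finset.sum_const, nsmul_eq_mul, ← mul_assoc, hN, one_mul, ← Finset.mul_sum] at h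
  exact h

theorem disagreeProb_blockGibbsCoupling
    (κ : ∀ a, (ι → X) → (↥(B a) → X) × (↥(B a) → X) → ℝ) (i : ι) :
    disagreeProb (blockGibbsCoupling C B p κ) i =
      1 / (#C : ℝ) * ∑ a ∈ C, ∑ y, p y * disagreeProb (patchCoupling (B a) y (κ a y)) i := by
  unfold blockGibbsCoupling blockCoupling
  rw [disagreeProb_const_mul, disagreeProb_sum]
  simp only [disagreeProb_sum, disagreeProb_const_mul]

theorem sum_blockGibbsStep :
    ∑ z, blockGibbsStep C B q p z =
      1 / (#C : ℝ) * ∑ a ∈ C, ∑ y, p y * ∑ w, condF q (B a) y w := by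
  simp only [blockGibbsStep, blockUpdate, ← Finset.mul_sum]
  rw [Finset.sum_comm]
  refine congrArg _ (Finset.sum_congr rfl fun a _ => ?_)
  rw [Finset.sum_comm]
  simp only [← Finset.mul_sum, sum_patchLaw]

theorem sum_patchF_ne_zero_of_sum_blockGibbsStep_eq_one (hp : IsPMF p)
    (h : ∑ z, blockGibbsStep C B q p z = 1) :
    C.Nonempty ∧ ∀ a ∈ C, ∀ y, 0 < p y → ∑ w, q (patchF (B a) y w) ≠ 0 := by
  have hC : C.Nonempty := by
    rw [Finset.nonempty_iff_ne_empty]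
    rintro rfl
    simp [sum_blockGibbsStep] at h
  refine ⟨hC, fun a₀ ha₀ y₀ hy₀ hD => h.not_lt ?_⟩
  have hle : ∀ a y, p y * ∑ w, condF q (B a) y w ≤ p y := fun a y => by
    rw [sum_condF]
    exact mul_le_of_le_one_right (hp.1 y) (div_self_le_one _)
  have hlt : ∑ a ∈ C, ∑ y, p y * ∑ w, condF q (B a) y w < ∑ a ∈ C, 1 := by
    refine Finset.sum_lt_sum (fun a _ => (Finset.sum_le_sum fun y _ => hle a y).trans_eq hp.2)
      ⟨a₀, ha₀, (Finset.sum_lt_sum (fun y _ => hle a₀ y) ⟨y₀, Finset.mem_univ _, ?_⟩).trans_eq hp.2⟩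
    rwa [sum_condF, hD, div_zero, mul_zero]
  have hN : (0 : ℝ) < #C := by exact_mod_cast hC.card_pos
  rw [sum_blockGibbsStep]
  calc _ < 1 / (#C : ℝ) * ∑ a ∈ C, 1 := by gcongr
    _ = 1 := by rw [Finset.sum_const, nsmul_one, one_div_mul_cancel hN.ne']

end BlockGibbs

section BlockGibbsW2

variable {ι X A : Type*} [Fintype ι] [DecidableEq ι] [Fintype X] [DecidableEq X]
  {C : Finset A} {B : A → Finset ι} {p q : (ι → X) → ℝ} {K : ℕ}

theorem W2sq_blockGibbsStep_le_sum_w2Cost (hp : IsPMF p) (hK : ∀ i, #{a ∈ C | i ∈ B a} ≤ K)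
    (hC : C.Nonempty) (κ : ∀ a, (ι → X) → (↥(B a) → X) × (↥(B a) → X) → ℝ)
    (hκ : ∀ a ∈ C, ∀ y, 0 < p y → IsCoupling (κ a y) (condF p (B a) y) (condF q (B a) y)) :
    W2sq p (blockGibbsStep C B q p) ≤
      K / (#C : ℝ) ^ 2 * ∑ a ∈ C, ∑ y, p y * w2Cost (κ a y) := by
  set c : A → (ι → X) → ι → ℝ := fun a y i => disagreeProb (patchCoupling (B a) y (κ a y)) i
  have hsupp : ∀ i, ∀ a ∈ C, i ∉ B a → ∑ y, p y * c a y i = 0 := fun i a _ hi => by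
    simp [c, disagreeProb_patchCoupling, hi]
  calc W2sq p (blockGibbsStep C B q p) ≤ w2Cost (blockGibbsCoupling C B p κ) :=
        W2sq_le_w2Cost (isCoupling_blockGibbsCoupling hC hp.1 hκ)
    _ = ∑ i, (1 / (#C : ℝ)) ^ 2 * (∑ a ∈ C, ∑ y, p y * c a y i) ^ 2 := by
        simp only [w2Cost, disagreeProb_blockGibbsCoupling, mul_pow, c]
    _ ≤ ∑ i, (1 / (#C : ℝ)) ^ 2 * (K * ∑ a ∈ C, (∑ y, p y * c a y i) ^ 2) := by
        gcongr with i
        refine (sq_sum_le_card_filter_mul_sum_sq C (i ∈ B ·) (hsupp i)).trans ?_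
        gcongr
        exact_mod_cast hK i
    _ ≤ ∑ i, (1 / (#C : ℝ)) ^ 2 * (K * ∑ a ∈ C, ∑ y, p y * c a y i ^ 2) := by
        gcongr with i a
        exact sq_sum_mul_le_sum_mul_sq hp _
    _ = K / (#C : ℝ) ^ 2 * ∑ a ∈ C, ∑ y, p y * w2Cost (patchCoupling (B a) y (κ a y)) := by
        simp only [w2Cost, Finset.mul_sum]
        rw [Finset.sum_comm]
        refine Finset.sum_congr rfl fun a _ => ?_
        rw [Finset.sum_comm]
        exact Finset.sum_congr rfl fun y _ => Finset.sum_congr rfl fun i _ => by ring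
    _ = K / (#C : ℝ) ^ 2 * ∑ a ∈ C, ∑ y, p y * w2Cost (κ a y) := by
        simp only [w2Cost_patchCoupling]

theorem W2sq_self_blockGibbsStep_le (hp : IsPMF p) (hq : ∀ z, 0 ≤ q z)
    (hK : ∀ i, #{a ∈ C | i ∈ B a} ≤ K) :
    W2sq p (blockGibbsStep C B q p) ≤
      K / (#C : ℝ) ^ 2 * ∑ a ∈ C, ∑ y, p y * W2sq (condF p (B a) y) (condF q (B a) y) := by
  -- a zero normaliser of some `condF q (B a) y` with `p y > 0` makes the step lose mass,
  -- and then `W2sq` takes the junk value `0`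
  by_cases hG : ∑ z, blockGibbsStep C B q p z = 1
  swap
  · rw [W2sq_eq_zero_of_sum_ne (by rwa [hp.2, ne_comm])]
    exact mul_nonneg (by positivity) (Finset.sum_nonneg fun a _ => Finset.sum_nonneg fun y _ =>
      mul_nonneg (hp.1 y) (W2sq_nonneg _ _))
  obtain ⟨hC, hq_ne⟩ := sum_patchF_ne_zero_of_sum_blockGibbsStep_eq_one hp hG
  refine le_of_forall_pos_le_add_mul (c := K / (#C : ℝ) ^ 2 * #C) (by positivity) fun ε hε => ?_
  have hκ : ∀ a y, ∃ κ, a ∈ C → 0 < p y → IsCoupling κ (condF p (B a) y) (condF q (B a) y) ∧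
      w2Cost κ < W2sq (condF p (B a) y) (condF q (B a) y) + ε := fun a y => by
    by_cases h : a ∈ C ∧ 0 < p y
    · obtain ⟨κ, hκ⟩ := exists_isCoupling_w2Cost_lt
        (isPMF_condF _ hp.1 (h.2.trans_le (le_sum_patchF _ hp.1 y)).ne')
        (isPMF_condF _ hq (hq_ne a h.1 y h.2)) hε
      exact ⟨κ, fun _ _ => hκ⟩
    · exact ⟨0, fun ha hy => absurd ⟨ha, hy⟩ h⟩
  choose κ hκ using hκ
  calc W2sq p (blockGibbsStep C B q p)
      ≤ K / (#C : ℝ) ^ 2 * ∑ a ∈ C, ∑ y, p y * w2Cost (κ a y) :=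
        W2sq_blockGibbsStep_le_sum_w2Cost hp hK hC κ fun a ha y hy => (hκ a y ha hy).1
    _ ≤ K / (#C : ℝ) ^ 2 * ∑ a ∈ C, ∑ y, p y * (W2sq (condF p (B a) y) (condF q (B a) y) + ε) := by
        gcongr K / _ * ?_
        refine Finset.sum_le_sum fun a ha => Finset.sum_le_sum fun y _ => ?_
        rcases (hp.1 y).eq_or_lt with h0 | hpos
        · simp [← h0]
        · exact mul_le_mul_of_nonneg_left (hκ a y ha hpos).2.le (hp.1 y)
    _ = K / (#C : ℝ) ^ 2 * ∑ a ∈ C, ∑ y, p y * W2sq (condF p (B a) y) (condF q (B a) y) +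
          K / (#C : ℝ) ^ 2 * #C * ε := by
        simp only [mul_add, Finset.sum_add_distrib, ← Finset.sum_mul, hp.2, one_mul,
          Finset.sum_const, nsmul_eq_mul]
        ring

end BlockGibbsW2

theorem card_filter_mem_blockIn_le {d : ℕ} (m : ℕ) (Λ : Finset (Site d)) (i : ↥Λ) :
    #{a ∈ corners m Λ | i ∈ blockIn Λ m a} ≤ m ^ d := by
  calc #{a ∈ corners m Λ | i ∈ blockIn Λ m a}
      ≤ #(Fintype.piFinset fun ν => Finset.Icc (i.1 ν - ((m : ℤ) - 1)) (i.1 ν)) := by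
        refine Finset.card_le_card fun a ha => ?_
        simp only [Finset.mem_filter, blockIn, cube, Finset.mem_attach, true_and,
          Fintype.mem_piFinset, Finset.mem_Icc] at ha ⊢
        intro ν
        have := ha.2 ν
        omega
    _ = ∏ _ν : Fin d, m := by
        rw [Fintype.card_piFinset]
        exact Finset.prod_congr rfl fun ν _ => by rw [Int.card_Icc]; omega
    _ = m ^ d := by simp

/-- inequality (4.2.14): the `W₂` distance between `p_Λ` and one step of
the block Gibbs sampler started from `p_Λ`. -/
theorem W2sq_self_cubeGibbsStep {d : ℕ} {X : Type*} [Fintype X] [DecidableEq X]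
    (Q : Ensemble d X) (Λ : Finset (Site d)) (ybar : Site d → X) (m : ℕ)
    (p : (↥Λ → X) → ℝ) (hp : IsPMF p) :
    W2sq p (cubeGibbsStep Q Λ ybar m p) ≤
      ((m : ℝ) ^ d / ((corners m Λ).card : ℝ) ^ 2) *
        ∑ a ∈ corners m Λ, ∑ y : ↥Λ → X, p y *
          W2sq (condF p (blockIn Λ m a) y) (condF (Q.q Λ ybar) (blockIn Λ m a) y) := by
  have h := W2sq_self_blockGibbsStep_le hp (Q.nonneg Λ ybar) (card_filter_mem_blockIn_le m Λ)
  push_cast at h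
  exact h
end
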